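/- arXiv:2404.18904 — 2 statements merged into one kernel-verified Lean document; each statement's English description precedes it below -/
import Mathlib

section
/- Let r ≥ 1 and m ∈ ℕ, and let G be a graph in which every vertex has finite (r,m)-rank. Then the r-admissibility of G is at most m. In particular, the order that sorts vertices by their (r,m)-rank (ties broken arbitrarily) witnesses this: for every vertex v, there do not exist m+1 paths of length at most r starting at v, ending at vertices of rank at least the rank of v, and vertex-disjoint except at v. -/
/-- Two vertices `u`, `v` of a graph `G` are `k`-near-twins if the symmetric
difference of their (open) neighborhoods has size at most `k`. -/
def nearTwin {V : Type*} (G : SimpleGraph V) (k : ℕ) (u v : V) : Prop :=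
  (symmDiff (G.neighborSet u) (G.neighborSet v)).ncard ≤ k

/-- The `k`-near-twin graph of `G`: same vertex set, edges between distinct
`k`-near-twins. -/
def ntGraph {V : Type*} (G : SimpleGraph V) (k : ℕ) : SimpleGraph V where
  Adj u v := u ≠ v ∧ nearTwin G k u v
  symm := ⟨by
    rintro u v ⟨h1, h2⟩
    refine ⟨h1.symm, ?_⟩
    unfold nearTwin at h2 ⊢
    rwa [symmDiff_comm]⟩
  loopless := ⟨fun v h => h.1 rfl⟩

/-- `u` lies in the closed `r`-neighborhood of `v` in `G − S`: there is a walk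
from `v` to `u` of length at most `r` avoiding `S`. -/
def AvoidClose {V : Type*} (G : SimpleGraph V) (r : ℕ) (S : Finset V) (v u : V) : Prop :=
  ∃ p : G.Walk v u, p.length ≤ r ∧ ∀ x ∈ p.support, x ∉ S

/-- `RankLE G r m i v` : the `(r,m)`-rank of `v` in `G` is at most `i`.
Vertices of degree at most `m` have rank `1`; a vertex has rank at most `i+1` if some
set `S` of at most `m` other vertices can be deleted so that every vertex (other than
`v`) in the closed `r`-neighborhood of `v` in `G − S` has rank at most `i`.
A vertex has finite rank iff `∃ i, RankLE G r m i v`. -/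
inductive RankLE {V : Type*} (G : SimpleGraph V) (r m : ℕ) : ℕ → V → Prop
  | base (v : V) (h : (G.neighborSet v).ncard ≤ m) : RankLE G r m 1 v
  | step (i : ℕ) (v : V) (S : Finset V) (hv : v ∉ S) (hS : S.card ≤ m)
      (h : ∀ u, u ≠ v → AvoidClose G r S v u → RankLE G r m i u) : RankLE G r m (i + 1) v

/-- The `(r,m)`-rank of a vertex (assuming it is finite). -/
noncomputable def rankOf {V : Type*} (G : SimpleGraph V) (r m : ℕ) (v : V) : ℕ :=
  sInf {i | RankLE G r m i v}

/-- If every vertex of `G` has finite `(r,m)`-rank (`r ≥ 1`), then the ordering of the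
vertices by rank witnesses `adm_r(G) ≤ m`: no vertex `v` admits `m+1` paths of length
at most `r`, vertex-disjoint except at `v`, ending at vertices of rank at least the
rank of `v`. -/
theorem stmt8 {V : Type*} [Fintype V] (G : SimpleGraph V) (r m : ℕ) (hr : 1 ≤ r)
    (hfin : ∀ v : V, ∃ i : ℕ, RankLE G r m i v) :
    ∀ v : V, ¬ ∃ (w : Fin (m + 1) → V) (p : ∀ i, G.Walk v (w i)),
      (∀ i, (p i).IsPath) ∧ (∀ i, (p i).length ≤ r) ∧ (∀ i, w i ≠ v) ∧
      (∀ i, rankOf G r m v ≤ rankOf G r m (w i)) ∧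
      (∀ i j, i ≠ j → ∀ x, x ∈ (p i).support → x ∈ (p j).support → x = v) := by
  intro v
  rintro ⟨w, p, hpath, hlen, hnev, hrank, hdisj⟩
  have hk : RankLE G r m (rankOf G r m v) v := Nat.sInf_mem (hfin v)
  generalize hk' : rankOf G r m v = k at hk
  cases hk with
  | base _ hdeg =>
    have hlenpos : ∀ j, 0 < (p j).length := by
      intro j
      rcases Nat.eq_zero_or_pos (p j).length with h | h
      · exact absurd ((p j).eq_of_length_eq_zero h).symm (hnev j)
      · exact h
    set s : Fin (m + 1) → V := fun j => (p j).getVert 1 with hs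
    have hadj : ∀ j, G.Adj v (s j) := by
      intro j
      have := (p j).adj_getVert_succ (i := 0) (hlenpos j)
      simpa [s] using this
    have hmem : ∀ j, s j ∈ (p j).support := by
      intro j
      rw [SimpleGraph.Walk.mem_support_iff_exists_getVert]
      exact ⟨1, rfl, hlenpos j⟩
    have hinj : Function.Injective s := by
      intro a b hab
      by_contra hne2
      have hb : s a ∈ (p b).support := hab ▸ hmem b
      have := hdisj a b hne2 (s a) (hmem a) hb
      exact (hadj a).ne' this
    have h1 : Nat.card (Fin (m + 1)) ≤ Nat.card (G.neighborSet v) :=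
      Nat.card_le_card_of_injective (fun j => ⟨s j, hadj j⟩)
        (fun a b hab => hinj (congrArg Subtype.val hab))
    rw [Nat.card_coe_set_eq, Nat.card_eq_fintype_card, Fintype.card_fin] at h1
    omega
  | step i _ S hvS hS h =>
    by_cases hall : ∀ j, ∃ x ∈ S, x ∈ (p j).support
    · choose g hgS hgsup using hall
      have hinj : Set.InjOn g ↑(Finset.univ : Finset (Fin (m+1))) := by
        intro a _ b _ hab
        by_contra hne2
        have hb : g a ∈ (p b).support := hab ▸ hgsup b
        have := hdisj a b hne2 (g a) (hgsup a) hb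
        exact hvS (this ▸ hgS a)
      have hcard : (Finset.univ : Finset (Fin (m + 1))).card ≤ S.card :=
        Finset.card_le_card_of_injOn g (fun a _ => hgS a) hinj
      simp [Finset.card_univ] at hcard
      omega
    · push_neg at hall
      obtain ⟨j, hj⟩ := hall
      have havoid : AvoidClose G r S v (w j) :=
        ⟨p j, hlen j, fun x hx hxS => hj x hxS hx⟩
      have hrj : RankLE G r m i (w j) := h (w j) (hnev j) havoid
      have hle : rankOf G r m (w j) ≤ i := Nat.sInf_le hrj
      have := hrank j
      omega
end

section
/- Let G be a graph, v a vertex, and suppose every set S ⊆ V(G)\{v} of size at most r·(m−1) leaves at least one vertex u ≠ v with a given property P within distance r of v in G−S. Then there exist m paths P_1, ..., P_m in G, each of length at most r, pairwise vertex-disjoint except for the common endpoint v, such that each P_i ends at a vertex u_i ≠ v satisfying P. -/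
lemma aux10 {V : Type*} [Fintype V] [DecidableEq V] (G : SimpleGraph V)
    (r m : ℕ) (v : V) (P : V → Prop)
    (hyp : ∀ S : Finset V, v ∉ S → S.card ≤ r * (m - 1) →
      ∃ u, u ≠ v ∧ P u ∧ AvoidClose G r S v u) :
    ∀ k, k ≤ m → ∃ (u : Fin k → V) (p : ∀ i, G.Walk v (u i)),
      (∀ i, (p i).IsPath) ∧ (∀ i, (p i).length ≤ r) ∧
      (∀ i, u i ≠ v ∧ P (u i)) ∧
      (∀ i j, i ≠ j → ∀ x, x ∈ (p i).support → x ∈ (p j).support → x = v) := by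
  intro k
  induction k with
  | zero =>
    intro _
    exact ⟨Fin.elim0, fun i => i.elim0, fun i => i.elim0, fun i => i.elim0,
      fun i => i.elim0, fun i => i.elim0⟩
  | succ k ih =>
    intro hk
    obtain ⟨u, p, hpath, hlen, hP, hdisj⟩ := ih (Nat.le_of_succ_le hk)
    set S : Finset V := (Finset.univ.filter (fun x => ∃ i, x ∈ (p i).support)).erase v with hSdef
    have hvS : v ∉ S := Finset.notMem_erase v _
    have hmemS : ∀ x, x ∈ S ↔ x ≠ v ∧ ∃ i, x ∈ (p i).support := by
      intro x; simp [hSdef]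
    have hScard : S.card ≤ r * (m - 1) := by
      have hsub : S ⊆ Finset.univ.biUnion (fun i : Fin k => (p i).support.toFinset.erase v) := by
        intro x hx
        rw [hmemS] at hx
        obtain ⟨hxv, i, hxi⟩ := hx
        exact Finset.mem_biUnion.2 ⟨i, Finset.mem_univ i,
          Finset.mem_erase.2 ⟨hxv, List.mem_toFinset.2 hxi⟩⟩
      have hcard1 : ∀ i : Fin k, ((p i).support.toFinset.erase v).card ≤ r := by
        intro i
        have hv : v ∈ (p i).support.toFinset := List.mem_toFinset.2 (p i).start_mem_support
        have hcf : (p i).support.toFinset.card = (p i).length + 1 := by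
          rw [List.toFinset_card_of_nodup (hpath i).support_nodup, SimpleGraph.Walk.length_support]
        rw [Finset.card_erase_of_mem hv, hcf]
        have := hlen i; omega
      calc S.card ≤ (Finset.univ.biUnion (fun i : Fin k => (p i).support.toFinset.erase v)).card :=
            Finset.card_le_card hsub
        _ ≤ ∑ i : Fin k, ((p i).support.toFinset.erase v).card := Finset.card_biUnion_le
        _ ≤ ∑ _i : Fin k, r := Finset.sum_le_sum (fun i _ => hcard1 i)
        _ = k * r := by simp [Finset.sum_const, mul_comm]
        _ ≤ (m - 1) * r := Nat.mul_le_mul_right r (by omega)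
        _ = r * (m - 1) := mul_comm _ _
    obtain ⟨w, hwv, hwP, q0, hq0len, hq0S⟩ := hyp S hvS hScard
    set q : G.Walk v w := q0.bypass with hq
    have hqpath : q.IsPath := q0.bypass_isPath
    have hqlen : q.length ≤ r := le_trans q0.length_bypass_le hq0len
    have hqS : ∀ x ∈ q.support, x ∉ S := fun x hx => hq0S x (q0.support_bypass_subset hx)
    refine ⟨Fin.cons w u, Fin.cons q p, ?_, ?_, ?_, ?_⟩
    · intro i
      refine Fin.cases ?_ ?_ i
      · exact hqpath
      · exact fun j => hpath j
    · intro i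
      refine Fin.cases ?_ ?_ i
      · exact hqlen
      · exact fun j => hlen j
    · intro i
      refine Fin.cases ?_ ?_ i
      · exact ⟨hwv, hwP⟩
      · exact fun j => hP j
    · intro i j hij x hxi hxj
      have key : ∀ (a : Fin k) (x : V), x ∈ q.support → x ∈ (p a).support → x = v := by
        intro a x hxq hxp
        by_contra hxv
        exact hqS x hxq ((hmemS x).2 ⟨hxv, a, hxp⟩)
      revert hij hxi hxj
      refine Fin.cases ?_ ?_ i
      · refine Fin.cases ?_ ?_ j
        · intro h; exact absurd rfl h
        · intro j' _ hxi hxj; exact key j' x hxi hxj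
      · intro i'
        refine Fin.cases ?_ ?_ j
        · intro _ hxi hxj; exact key i' x hxj hxi
        · intro j' hij hxi hxj
          exact hdisj i' j' (fun h => hij (congrArg Fin.succ h)) x hxi hxj


/-- Menger-type lemma for short paths: if for every set `S ⊆ V(G) \ {v}` of size at
most `r·(m−1)` there remains a vertex `u ≠ v` with property `P` within distance `r` of
`v` in `G − S`, then there are `m` paths of length at most `r` from `v`, pairwise
vertex-disjoint except at `v`, each ending at a vertex `≠ v` satisfying `P`. -/
theorem stmt10 {V : Type*} [Fintype V] [DecidableEq V] (G : SimpleGraph V)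
    (r m : ℕ) (v : V) (P : V → Prop)
    (hyp : ∀ S : Finset V, v ∉ S → S.card ≤ r * (m - 1) →
      ∃ u, u ≠ v ∧ P u ∧ AvoidClose G r S v u) :
    ∃ (u : Fin m → V) (p : ∀ i, G.Walk v (u i)),
      (∀ i, (p i).IsPath) ∧ (∀ i, (p i).length ≤ r) ∧
      (∀ i, u i ≠ v ∧ P (u i)) ∧
      (∀ i j, i ≠ j → ∀ x, x ∈ (p i).support → x ∈ (p j).support → x = v) := by
  exact aux10 G r m v P hyp m le_rfl
end
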